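/- The set of all (a,b) ∈ ℝ² satisfying 3a + (9/8)b > 0, 3a + (7/8)b > 0, 3a + (3/4)b > 0, 3a + (5/4)b > 0, 3a + b > 0, 3a + (11/8)b > 0 and 3a + (5/8)b > 0 is contained in the union of the topological interiors of the conical hull of {(2/3, -1), (0, 1), (-1/3, 2)}, the conical hull of {(2/3, -1), (1, -2), (4/3, -3)}, the conical hull of {(0, 1), (-1/3, 2), (-2/3, 3)}, and the conical hull of {(2/3, -1), (0, 1), (1, -2)} in ℝ². -/
import Mathlib


/-- The conical hull of three vectors in `ℝ × ℝ`: all linear combinations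
with nonnegative real coefficients. -/
def coneHull3 (v₁ v₂ v₃ : ℝ × ℝ) : Set (ℝ × ℝ) :=
  {x | ∃ c₁ c₂ c₃ : ℝ, 0 ≤ c₁ ∧ 0 ≤ c₂ ∧ 0 ≤ c₃ ∧ x = c₁ • v₁ + c₂ • v₂ + c₃ • v₃}

lemma open2 (a b c d : ℝ) :
    IsOpen {p : ℝ × ℝ | 0 < a * p.1 + b * p.2 ∧ 0 < c * p.1 + d * p.2} := by
  apply IsOpen.inter
  · exact isOpen_lt continuous_const ((continuous_const.mul continuous_fst).add (continuous_const.mul continuous_snd))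
  · exact isOpen_lt continuous_const ((continuous_const.mul continuous_fst).add (continuous_const.mul continuous_snd))

lemma mem_cone (v₁ v₂ v₃ : ℝ × ℝ) (c₁ c₂ c₃ : ℝ) (h₁ : 0 ≤ c₁) (h₂ : 0 ≤ c₂)
    (h₃ : 0 ≤ c₃) (p : ℝ × ℝ)
    (hx : p.1 = c₁ * v₁.1 + c₂ * v₂.1 + c₃ * v₃.1)
    (hy : p.2 = c₁ * v₁.2 + c₂ * v₂.2 + c₃ * v₃.2) :
    p ∈ coneHull3 v₁ v₂ v₃ := by
  exact ⟨c₁, c₂, c₃, h₁, h₂, h₃, by apply Prod.ext <;> simpa⟩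

theorem stmt_6 :
    {p : ℝ × ℝ | 3 * p.1 + (9/8) * p.2 > 0 ∧
      3 * p.1 + (7/8) * p.2 > 0 ∧
      3 * p.1 + (3/4) * p.2 > 0 ∧
      3 * p.1 + (5/4) * p.2 > 0 ∧
      3 * p.1 + p.2 > 0 ∧
      3 * p.1 + (11/8) * p.2 > 0 ∧
      3 * p.1 + (5/8) * p.2 > 0} ⊆
      interior (coneHull3 (2/3, -1) (0, 1) (-1/3, 2)) ∪
      interior (coneHull3 (2/3, -1) (1, -2) (4/3, -3)) ∪
      interior (coneHull3 (0, 1) (-1/3, 2) (-2/3, 3)) ∪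
      interior (coneHull3 (2/3, -1) (0, 1) (1, -2)) := by
  have h0 : {p : ℝ × ℝ | 0 < 6 * p.1 + 1 * p.2 ∧ 0 < 3 * p.1 + 2 * p.2} ⊆
      interior (coneHull3 (2/3, -1) (0, 1) (-1/3, 2)) := by
    apply interior_maximal _ (open2 6 1 3 2)
    rintro ⟨x, y⟩ ⟨h1, h2⟩
    exact mem_cone _ _ _ (2*x + y/3) 0 (x + 2*y/3)
      (by linarith) le_rfl (by linarith) (x, y) (by norm_num; ring) (by norm_num; ring)
  have h1 : {p : ℝ × ℝ | 0 < 9 * p.1 + 4 * p.2 ∧ 0 < (-3) * p.1 + (-2) * p.2} ⊆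
      interior (coneHull3 (2/3, -1) (1, -2) (4/3, -3)) := by
    apply interior_maximal _ (open2 9 4 (-3) (-2))
    rintro ⟨x, y⟩ ⟨h1, h2⟩
    exact mem_cone _ _ _ ((9/2)*x + 2*y) 0 (-(3/2)*x - y)
      (by linarith) le_rfl (by linarith) (x, y) (by norm_num; ring) (by norm_num; ring)
  have h2 : {p : ℝ × ℝ | 0 < 9 * p.1 + 2 * p.2 ∧ 0 < (-1) * p.1 + 0 * p.2} ⊆
      interior (coneHull3 (0, 1) (-1/3, 2) (-2/3, 3)) := by
    apply interior_maximal _ (open2 9 2 (-1) 0)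
    rintro ⟨x, y⟩ ⟨h1, h2⟩
    exact mem_cone _ _ _ ((9/2)*x + y) 0 (-(3/2)*x)
      (by linarith) le_rfl (by linarith) (x, y) (by norm_num; ring) (by norm_num; ring)
  have h3 : {p : ℝ × ℝ | 0 < 2 * p.1 + 1 * p.2 ∧ 0 < 1 * p.1 + 0 * p.2} ⊆
      interior (coneHull3 (2/3, -1) (0, 1) (1, -2)) := by
    apply interior_maximal _ (open2 2 1 1 0)
    rintro ⟨x, y⟩ ⟨h1, h2⟩
    exact mem_cone _ _ _ 0 (2*x + y) x
      le_rfl (by linarith) (by linarith) (x, y) (by norm_num) (by norm_num; ring)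
  rintro ⟨x, y⟩ ⟨a1, a2, a3, a4, a5, a6, a7⟩
  simp only [Set.mem_setOf_eq] at *
  rcases lt_trichotomy x 0 with hx | hx | hx
  · exact Or.inl (Or.inr (h2 ⟨by nlinarith, by nlinarith⟩))
  · subst hx
    exact Or.inl (Or.inl (Or.inl (h0 ⟨by simp; nlinarith, by simp; nlinarith⟩)))
  · rcases le_or_gt (2 * x + y) 0 with hy | hy
    · exact Or.inl (Or.inl (Or.inr (h1 ⟨by nlinarith, by nlinarith⟩)))
    · exact Or.inr (h3 ⟨by nlinarith, by nlinarith⟩)
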